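/- Let F be a field, and let C be the chain complex over F[U] that is free with basis x_0, …, x_n (n even), graded so that x_k has homological degree m_k, with differential ∂x_{2k−1} = U^{α_{2k−2}−α_{2k−1}} x_{2k−2} + x_{2k} for 1 ≤ 2k−1 ≤ n and ∂x_{2k} = 0, where (α_k) is a strictly decreasing integer sequence and the exponents α_{2k−2} − α_{2k−1} are positive. Then the homology H(C), as an F[U]-module, has free part of rank one; that is, H(C) ⊗_{F[U]} F[U, U^{−1}] is one-dimensional over F[U, U^{−1}]. -/

import Mathlib

/-!
Sending `x_{2k}` to `w_k = (-1)^k U^{c_0 + ⋯ + c_{k-1}}` (where `c_k = α_{2k} - α_{2k+1}`) and the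
odd generators to `0` is a chain map `p : C → F[U]`, split by `i : 1 ↦ x_0`. The operator `h`
with `h x_{2k+1} = 0`, `h x_0 = 0` and `h x_{2k+2} = x_{2k+1} - U^{c_k} h x_{2k}` satisfies
`1 - i p = ∂h + h∂`; this needs `n` even, so that `∂x_{2k+1}` always involves `x_{2k+2}`.
Hence `H(C) ≅ F[U]`, which stays free of rank one after inverting `U`.
-/

open Polynomial

set_option synthInstance.maxHeartbeats 400000

open LinearMap in
noncomputable def LinearMap.homologyEquivOfHomotopy {R M N : Type*} [Ring R] [AddCommGroup M]
    [Module R M] [AddCommGroup N] [Module R N] (d h : M →ₗ[R] M) (p : M →ₗ[R] N)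
    (i : N →ₗ[R] M) (hpd : p ∘ₗ d = 0) (hdi : d ∘ₗ i = 0) (hpi : p ∘ₗ i = id)
    (hh : id - i ∘ₗ p = d ∘ₗ h + h ∘ₗ d) :
    (ker d ⧸ (range d).comap (ker d).subtype) ≃ₗ[R] N :=
  have hq : Function.Surjective (p ∘ₗ (ker d).subtype) := fun y =>
    ⟨⟨i y, by simpa using congr($hdi y)⟩, by simpa using congr($hpi y)⟩
  have hker : ker (p ∘ₗ (ker d).subtype) = (range d).comap (ker d).subtype := by
    ext ⟨z, hz⟩
    simp only [mem_ker, Submodule.mem_comap, Submodule.coe_subtype, mem_range, coe_comp,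
      Function.comp_apply]
    refine ⟨fun hpz => ⟨h z, ?_⟩, ?_⟩
    · simpa [hpz, mem_ker.1 hz] using congr($hh z).symm
    · rintro ⟨y, rfl⟩
      simpa using congr($hpd y)
  (Submodule.quotEquivOfEq _ _ hker.symm).trans
    ((p ∘ₗ (ker d).subtype).quotKerEquivOfSurjective hq)

universe u

open nonZeroDivisors in
theorem rank_localizedModule_eq_one_of_equiv {R M : Type u} [CommRing R] [Nontrivial R]
    [AddCommGroup M] [Module R M] {S : Submonoid R} (hS : S ≤ R⁰) (e : M ≃ₗ[R] R) :
    Module.rank (Localization S) (LocalizedModule S M) = 1 := by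
  rw [IsLocalization.rank_eq (Localization S) S hS,
    IsLocalizedModule.rank_eq S hS (LocalizedModule.mkLinearMap S M), e.rank_eq, Module.rank_self]

namespace ModelComplex

variable {R : Type*} [CommRing R] {n : ℕ}

variable (R n) in
/-- The generator `x_i`, and `0` for `i > n`. -/
noncomputable def gen (i : ℕ) : Fin (n + 1) → R :=
  if h : i < n + 1 then Pi.single ⟨i, h⟩ 1 else 0

theorem gen_of_lt {i : ℕ} (h : i < n + 1) : gen R n i = Pi.single ⟨i, h⟩ 1 := dif_pos h

theorem gen_eq_zero_of_lt {i : ℕ} (h : n < i) : gen R n i = 0 := dif_neg (by omega)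

theorem gen_val (j : Fin (n + 1)) : gen R n j = Pi.single j 1 := gen_of_lt j.isLt

theorem linearMap_ext_gen {M : Type*} [AddCommGroup M] [Module R M]
    {f g : (Fin (n + 1) → R) →ₗ[R] M}
    (heven : ∀ k, 2 * k ≤ n → f (gen R n (2 * k)) = g (gen R n (2 * k)))
    (hodd : ∀ k, 2 * k + 1 ≤ n → f (gen R n (2 * k + 1)) = g (gen R n (2 * k + 1))) :
    f = g := by
  refine (Pi.basisFun R (Fin (n + 1))).ext fun j => ?_
  rw [Pi.basisFun_apply, ← gen_val]
  have hj := j.isLt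
  obtain ⟨k, hk | hk⟩ := Nat.even_or_odd' j <;> rw [hk]
  · exact heven k (by omega)
  · exact hodd k (by omega)

variable (R n) in
noncomputable def evenLift {M : Type*} [AddCommGroup M] [Module R M] (v : ℕ → M) :
    (Fin (n + 1) → R) →ₗ[R] M :=
  (Pi.basisFun R (Fin (n + 1))).constr R fun j => if Even (j : ℕ) then v (j / 2) else 0

section evenLift

variable {M : Type*} [AddCommGroup M] [Module R M] (v : ℕ → M)

theorem evenLift_gen_even {k : ℕ} (hk : 2 * k ≤ n) :
    evenLift R n v (gen R n (2 * k)) = v k := by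
  rw [gen_of_lt (by omega), ← Pi.basisFun_apply, evenLift, Module.Basis.constr_basis]
  simp

theorem evenLift_gen_odd (k : ℕ) : evenLift R n v (gen R n (2 * k + 1)) = 0 := by
  by_cases hk : 2 * k + 1 < n + 1
  · rw [gen_of_lt hk, ← Pi.basisFun_apply, evenLift, Module.Basis.constr_basis]
    simp
  · rw [gen_eq_zero_of_lt (by omega), map_zero]

end evenLift

/-- In homology `[x_{2k}] = weight u k • [x_0]`. -/
def weight (u : ℕ → R) : ℕ → R
  | 0 => 1
  | k + 1 => -(u k * weight u k)

variable (n) in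
noncomputable def homotopyVec (u : ℕ → R) : ℕ → Fin (n + 1) → R
  | 0 => 0
  | k + 1 => gen R n (2 * k + 1) - u k • homotopyVec u k

variable (n) in
noncomputable def augmentation (u : ℕ → R) : (Fin (n + 1) → R) →ₗ[R] R :=
  evenLift R n (weight u)

variable (n) in
noncomputable def homotopy (u : ℕ → R) : (Fin (n + 1) → R) →ₗ[R] Fin (n + 1) → R :=
  evenLift R n (homotopyVec n u)

variable (R n) in
noncomputable def inclusion : R →ₗ[R] Fin (n + 1) → R :=
  LinearMap.toSpanSingleton R _ (gen R n 0)

structure IsModelDifferential (u : ℕ → R) (d : (Fin (n + 1) → R) →ₗ[R] Fin (n + 1) → R) :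
    Prop where
  map_gen_odd : ∀ k, 2 * k + 1 ≤ n →
    d (gen R n (2 * k + 1)) = u k • gen R n (2 * k) + gen R n (2 * k + 2)
  map_gen_even : ∀ k, 2 * k ≤ n → d (gen R n (2 * k)) = 0

theorem augmentation_gen_zero (u : ℕ → R) : augmentation n u (gen R n 0) = 1 := by
  simpa [augmentation, weight] using evenLift_gen_even (n := n) (weight u) (k := 0) (by omega)

theorem augmentation_comp_inclusion (u : ℕ → R) : augmentation n u ∘ₗ inclusion R n = .id :=
  LinearMap.ext_ring <| by simp [inclusion, augmentation_gen_zero]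

namespace IsModelDifferential

variable {u : ℕ → R} {d : (Fin (n + 1) → R) →ₗ[R] Fin (n + 1) → R}

theorem map_gen_two_mul (hd : IsModelDifferential u d) (k : ℕ) : d (gen R n (2 * k)) = 0 := by
  by_cases hk : 2 * k ≤ n
  · exact hd.map_gen_even k hk
  · rw [gen_eq_zero_of_lt (by omega), map_zero]

theorem comp_self (hd : IsModelDifferential u d) : d ∘ₗ d = 0 := by
  refine linearMap_ext_gen (fun k hk => ?_) (fun k hk => ?_)
  · simp [hd.map_gen_even k hk]
  · simp [hd.map_gen_odd k hk, ← mul_add_one 2 k, hd.map_gen_two_mul]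

theorem comp_inclusion (hd : IsModelDifferential u d) : d ∘ₗ inclusion R n = 0 :=
  LinearMap.ext_ring <| by simpa [inclusion] using hd.map_gen_two_mul 0

theorem augmentation_comp (hd : IsModelDifferential u d) (hn : Even n) :
    augmentation n u ∘ₗ d = 0 := by
  refine linearMap_ext_gen (fun k hk => ?_) (fun k hk => ?_)
  · simp [hd.map_gen_even k hk]
  · have hk' : 2 * (k + 1) ≤ n := by obtain ⟨m, rfl⟩ := hn; omega
    simp [hd.map_gen_odd k hk, augmentation, evenLift_gen_even _ (show 2 * k ≤ n by omega),
      ← mul_add_one 2 k, evenLift_gen_even _ hk', weight]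

theorem map_homotopyVec (hd : IsModelDifferential u d) {k : ℕ} (hk : 2 * k ≤ n) :
    d (homotopyVec n u k) = gen R n (2 * k) - weight u k • gen R n 0 := by
  induction k with
  | zero => simp [homotopyVec, weight]
  | succ k ih =>
    rw [homotopyVec, map_sub, map_smul, hd.map_gen_odd k (by omega), ih (by omega), weight]
    module

theorem id_sub_inclusion_comp_augmentation (hd : IsModelDifferential u d) (hn : Even n) :
    .id - inclusion R n ∘ₗ augmentation n u = d ∘ₗ homotopy n u + homotopy n u ∘ₗ d := by
  refine linearMap_ext_gen (fun k hk => ?_) (fun k hk => ?_)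
  · simp [hd.map_gen_even k hk, homotopy, augmentation, evenLift_gen_even _ hk, inclusion,
      hd.map_homotopyVec hk]
  · have hk' : 2 * (k + 1) ≤ n := by obtain ⟨m, rfl⟩ := hn; omega
    simp [hd.map_gen_odd k hk, homotopy, augmentation, inclusion, evenLift_gen_odd,
      evenLift_gen_even _ (show 2 * k ≤ n by omega), ← mul_add_one 2 k, evenLift_gen_even _ hk',
      homotopyVec]

noncomputable def homologyEquiv (hd : IsModelDifferential u d) (hn : Even n) :
    (LinearMap.ker d ⧸ (LinearMap.range d).comap (LinearMap.ker d).subtype) ≃ₗ[R] R :=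
  d.homologyEquivOfHomotopy (homotopy n u) (augmentation n u) (inclusion R n)
    (hd.augmentation_comp hn) hd.comp_inclusion (augmentation_comp_inclusion u)
    (hd.id_sub_inclusion_comp_augmentation hn)

end IsModelDifferential

end ModelComplex

open ModelComplex in
/-- The model complex of an L-space knot: the free `F[U]`-complex on `x_0, …, x_n` (`n` even)
with `∂x_{2k+1} = U^{α_{2k} - α_{2k+1}} x_{2k} + x_{2k+2}` and `∂x_{2k} = 0`, where `(α_k)`
is strictly decreasing, has homology whose free part has rank one: after inverting `U`, the
homology becomes one-dimensional over `F[U, U⁻¹]`. -/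
theorem model_complex_rank_one (F : Type*) [Field F] (n : ℕ) (hn : Even n)
    (α : ℕ → ℤ)
    (d : (Fin (n + 1) → Polynomial F) →ₗ[Polynomial F] (Fin (n + 1) → Polynomial F))
    (hodd : ∀ (k : ℕ) (hk : 2 * k + 1 ≤ n),
      d (Pi.single (⟨2 * k + 1, by omega⟩ : Fin (n + 1)) (1 : Polynomial F)) =
        (X : Polynomial F) ^ (α (2 * k) - α (2 * k + 1)).toNat •
            (Pi.single (⟨2 * k, by omega⟩ : Fin (n + 1)) (1 : Polynomial F)
              : Fin (n + 1) → Polynomial F) +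
          Pi.single (⟨2 * k + 2, by obtain ⟨m, hm⟩ := hn; omega⟩ : Fin (n + 1))
            (1 : Polynomial F))
    (heven : ∀ (k : ℕ) (hk : 2 * k ≤ n),
      d (Pi.single (⟨2 * k, by omega⟩ : Fin (n + 1)) (1 : Polynomial F)) = 0) :
    LinearMap.range d ≤ LinearMap.ker d ∧
    Module.rank (Localization (Submonoid.powers (X : Polynomial F)))
      (LocalizedModule (Submonoid.powers (X : Polynomial F))
        ((LinearMap.ker d) ⧸
          (LinearMap.range d).comap (LinearMap.ker d).subtype)) = 1 := by
  have hd : IsModelDifferential (fun k => (X : F[X]) ^ (α (2 * k) - α (2 * k + 1)).toNat) d :=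
    { map_gen_odd := fun k hk => by
        have hk' : 2 * k + 2 < n + 1 := by obtain ⟨m, rfl⟩ := hn; omega
        rw [gen_of_lt (by omega), gen_of_lt (by omega), gen_of_lt hk']
        exact hodd k hk
      map_gen_even := fun k hk => by rw [gen_of_lt (by omega)]; exact heven k hk }
  exact ⟨LinearMap.range_le_ker_iff.2 hd.comp_self, rank_localizedModule_eq_one_of_equiv
    (powers_le_nonZeroDivisors_of_noZeroDivisors X_ne_zero) (hd.homologyEquiv hn)⟩
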